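/- For c ≥ 2 with c√n ∈ ℕ, letting ℓ = max{k ∈ ℕ : (k − 1)⌈√(kn)⌉ + 1 ≤ c√n}, the burning number of the fence satisfies b(G_{c√n, n}) ≥ ⌈√(ℓn)⌉. -/

import Mathlib

open SimpleGraph

/-- The set of vertices burned after `t` rounds of the burning process on `G`,
where `s i` is the source of fire chosen in round `i + 1`. -/
def burnSet {V : Type*} (G : SimpleGraph V) (s : ℕ → V) : ℕ → Set V
  | 0 => ∅
  | t + 1 => burnSet G s t ∪ {w | ∃ u ∈ burnSet G s t, G.Adj u w} ∪ {s t}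

/-- The partial burning number `b(G, S)`: the least number of rounds needed to
burn every vertex of `S`. -/
noncomputable def pburn {V : Type*} (G : SimpleGraph V) (S : Set V) : ℕ :=
  sInf {r | ∃ s : ℕ → V, S ⊆ burnSet G s r}

/-- The burning number `b(G)`. -/
noncomputable def burn {V : Type*} (G : SimpleGraph V) : ℕ :=
  pburn G Set.univ

/-- The ball of radius `t` around `v` in graph distance. -/
def gball {V : Type*} (G : SimpleGraph V) (v : V) (t : ℕ) : Set V :=
  {w | G.dist v w ≤ t}

/-- The `m × n` Cartesian grid `P_m □ P_n`; the first coordinate is the height (row). -/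
def gridGraph (m n : ℕ) : SimpleGraph (Fin m × Fin n) :=
  (pathGraph m) □ (pathGraph n)

/-!
Put `ℓ` rows at heights `0, d, …, (ℓ - 1) d` with `d = ⌈√(ℓn)⌉`; they fit into the grid by the
choice of `ℓ`. If `r < d` rounds burned the grid, the source lit in round `t + 1` has burned a
taxicab ball of radius `r - 1 - t < d`, which meets these rows in at most `2 (r - 1 - t) + 1`
vertices. Hence `ℓ n ≤ 1 + 3 + ⋯ + (2r - 1) = r² < ℓ n`.
-/

open Finset

section Burning

variable {V : Type*} {G : SimpleGraph V} {s : ℕ → V}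

lemma burnSet_mono : Monotone (burnSet G s) :=
  monotone_nat_of_le_succ fun _ _ hx => Or.inl (Or.inl hx)

lemma source_mem_burnSet (t : ℕ) : s t ∈ burnSet G s (t + 1) := Or.inr rfl

lemma exists_walk_of_mem_burnSet {r : ℕ} {w : V} (h : w ∈ burnSet G s r) :
    ∃ t, ∃ p : G.Walk (s t) w, p.length + t < r := by
  induction r generalizing w with
  | zero => exact h.elim
  | succ r ih =>
    rcases h with (h | ⟨u, hu, hadj⟩) | rfl
    · obtain ⟨t, p, hp⟩ := ih h
      exact ⟨t, p, by omega⟩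
    · obtain ⟨t, p, hp⟩ := ih hu
      exact ⟨t, p.concat hadj, by rw [Walk.length_concat]; omega⟩
    · exact ⟨r, Walk.nil, by simp⟩

lemma exists_subset_burnSet [Fintype V] [Nonempty V] (S : Set V) :
    ∃ r s, S ⊆ burnSet G s r := by
  let e := Fintype.equivFin V
  let s t := e.symm ⟨t % Fintype.card V, Nat.mod_lt _ Fintype.card_pos⟩
  refine ⟨Fintype.card V, s, fun v _ => ?_⟩
  have hv : s (e v) = v := by simp [s, Nat.mod_eq_of_lt (e v).isLt]
  exact hv ▸ burnSet_mono (e v).isLt (source_mem_burnSet (G := G) (s := s) (e v))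

lemma le_pburn [Fintype V] [Nonempty V] {S : Set V} {k : ℕ}
    (h : ∀ r s, S ⊆ burnSet G s r → k ≤ r) : k ≤ pburn G S := by
  obtain ⟨r, s, hs⟩ := exists_subset_burnSet (G := G) S
  exact le_csInf ⟨r, s, hs⟩ fun r ⟨s, hs⟩ => h r s hs

end Burning

def taxicab (p q : ℤ × ℤ) : ℤ := |p.1 - q.1| + |p.2 - q.2|

lemma taxicab_triangle (p q r : ℤ × ℤ) : taxicab p r ≤ taxicab p q + taxicab q r := by
  unfold taxicab
  linarith [abs_sub_le p.1 q.1 r.1, abs_sub_le p.2 q.2 r.2]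

/-- The diagonal coordinate `p.1 + p.2` is injective on `F`: two points of `F` on one diagonal
are in rows less than `d` apart, hence in the same row. -/
lemma card_le_of_taxicab_le_of_dvd {F : Finset (ℤ × ℤ)} {c : ℤ × ℤ} {ρ d : ℕ} (hρd : ρ < d)
    (hdvd : ∀ p ∈ F, (d : ℤ) ∣ p.1) (hF : ∀ p ∈ F, taxicab c p ≤ ρ) :
    #F ≤ 2 * ρ + 1 := by
  have hmaps : Set.MapsTo (fun p : ℤ × ℤ => p.1 + p.2 - (c.1 + c.2)) F (Icc (-ρ : ℤ) ρ) := by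
    intro p hp
    have := hF p hp
    unfold taxicab at this
    simp only [coe_Icc, Set.mem_Icc]
    constructor <;> linarith [le_abs_self (c.1 - p.1), neg_abs_le (c.1 - p.1),
      le_abs_self (c.2 - p.2), neg_abs_le (c.2 - p.2)]
  have hinj : Set.InjOn (fun p : ℤ × ℤ => p.1 + p.2 - (c.1 + c.2)) F := by
    intro p hp q hq hpq
    have hp' := hF p hp
    have hq' := hF q hq
    simp only at hpq
    unfold taxicab at hp' hq'
    have hrow : |p.1 - q.1| < d := by
      rw [abs_lt]
      constructor <;> linarith [le_abs_self (c.1 - p.1), neg_abs_le (c.1 - p.1),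
        le_abs_self (c.2 - p.2), neg_abs_le (c.2 - p.2), le_abs_self (c.1 - q.1),
        neg_abs_le (c.1 - q.1), le_abs_self (c.2 - q.2), neg_abs_le (c.2 - q.2)]
    have h1 := Int.eq_zero_of_abs_lt_dvd (dvd_sub (hdvd p hp) (hdvd q hq)) hrow
    exact Prod.ext (by linarith) (by linarith)
  calc #F ≤ #(Icc (-ρ : ℤ) ρ) := card_le_card_of_injOn _ hmaps hinj
    _ = 2 * ρ + 1 := by simp only [Int.card_Icc]; omega

section Grid

variable {m n : ℕ}

def gridCoord (v : Fin m × Fin n) : ℤ × ℤ := ((v.1 : ℕ), (v.2 : ℕ))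

lemma gridCoord_injective : Function.Injective (gridCoord (m := m) (n := n)) := by
  intro u v h
  simp only [gridCoord, Prod.mk.injEq, Nat.cast_inj] at h
  exact Prod.ext (Fin.ext h.1) (Fin.ext h.2)

lemma taxicab_gridCoord_le_one_of_adj {u v : Fin m × Fin n} (h : (gridGraph m n).Adj u v) :
    taxicab (gridCoord u) (gridCoord v) ≤ 1 := by
  unfold taxicab gridCoord
  rcases h with ⟨h, heq⟩ | ⟨h, heq⟩ <;> rw [pathGraph_adj] at h <;> simp only [heq, sub_self,
    abs_zero, add_zero, zero_add] <;> rw [abs_le] <;> omega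

lemma taxicab_gridCoord_le_length {u v : Fin m × Fin n} (p : (gridGraph m n).Walk u v) :
    taxicab (gridCoord u) (gridCoord v) ≤ p.length := by
  induction p with
  | nil => simp [taxicab]
  | @cons a b c h p ih =>
    rw [Walk.length_cons, Nat.cast_succ]
    linarith [taxicab_triangle (gridCoord a) (gridCoord b) (gridCoord c),
      taxicab_gridCoord_le_one_of_adj h]

end Grid

lemma sum_range_reflect_odd_eq_sq (r : ℕ) : ∑ t ∈ range r, (2 * (r - 1 - t) + 1) = r ^ 2 := by
  induction r with
  | zero => simp
  | succ r ih =>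
    have hterm : ∀ t ∈ range r, 2 * (r + 1 - 1 - (t + 1)) + 1 = 2 * (r - 1 - t) + 1 := by
      intro t _; omega
    rw [sum_range_succ', sum_congr rfl hterm, ih]
    simp only [Nat.add_sub_cancel, Nat.sub_zero]
    ring

lemma ceil_sqrt_le_of_le_sq {x r : ℕ} (h : x ≤ r ^ 2) : ⌈Real.sqrt x⌉₊ ≤ r :=
  Nat.ceil_le.mpr ((Real.sqrt_le_left (Nat.cast_nonneg r)).mpr (by exact_mod_cast h))

lemma card_le_sq_of_forall_mem_burnSet {ι : Type*} [Fintype ι] {m n d r : ℕ}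
    {s : ℕ → Fin m × Fin n} {f : ι → Fin m × Fin n} (hf : Function.Injective f)
    (hrow : ∀ i, d ∣ ((f i).1 : ℕ)) (hburn : ∀ i, f i ∈ burnSet (gridGraph m n) s r)
    (hr : r ≤ d) : Fintype.card ι ≤ r ^ 2 := by
  classical
  have hsource : ∀ i, ∃ t, t < r ∧ taxicab (gridCoord (s t)) (gridCoord (f i)) + t < r := by
    intro i
    obtain ⟨t, p, hp⟩ := exists_walk_of_mem_burnSet (hburn i)
    have := taxicab_gridCoord_le_length p
    exact ⟨t, by omega, by omega⟩
  choose φ hφr hφ using hsource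
  have hfiber : ∀ t ∈ range r, #{i | φ i = t} ≤ 2 * (r - 1 - t) + 1 := by
    intro t ht
    rw [mem_range] at ht
    rw [← card_image_of_injective _ (gridCoord_injective.comp hf)]
    refine card_le_of_taxicab_le_of_dvd (c := gridCoord (s t)) (d := d) (by omega) ?_ ?_
    · simp only [mem_image, forall_exists_index, and_imp]
      rintro _ i _ rfl
      exact Int.natCast_dvd_natCast.mpr (hrow i)
    · simp only [mem_image, mem_filter, mem_univ, true_and, forall_exists_index, and_imp,
        Function.comp_apply]
      rintro _ i rfl rfl
      have := hφ i
      omega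
  calc Fintype.card ι = ∑ t ∈ range r, #{i | φ i = t} :=
        card_eq_sum_card_fiberwise fun i _ => mem_range.mpr (hφr i)
    _ ≤ ∑ t ∈ range r, (2 * (r - 1 - t) + 1) := sum_le_sum hfiber
    _ = r ^ 2 := sum_range_reflect_odd_eq_sq r

theorem burn_fence_lower_general (n m ℓ : ℕ)
    (hℓ : IsGreatest {k : ℕ | (k - 1) * ⌈Real.sqrt (k * n)⌉₊ + 1 ≤ m} ℓ) :
    ⌈Real.sqrt (ℓ * n)⌉₊ ≤ burn (gridGraph m n) := by
  set d := ⌈Real.sqrt (ℓ * n)⌉₊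
  have hfit : (ℓ - 1) * d + 1 ≤ m := hℓ.1
  rcases Nat.eq_zero_or_pos (ℓ * n) with hℓn | hℓn
  · simp [d, ← Nat.cast_mul, hℓn]
  have hd : 0 < d := Nat.ceil_pos.mpr (Real.sqrt_pos.mpr (by exact_mod_cast hℓn))
  have hrow : ∀ j : Fin ℓ, d * j < m := fun j => by
    have : d * j ≤ (ℓ - 1) * d := by rw [mul_comm]; exact Nat.mul_le_mul_right d (by omega)
    omega
  have : Nonempty (Fin m × Fin n) := ⟨(⟨0, by omega⟩, ⟨0, Nat.pos_of_mul_pos_left hℓn⟩)⟩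
  refine le_pburn fun r s hs => ?_
  by_contra! hr
  have hinj : Function.Injective fun i : Fin ℓ × Fin n => ((⟨d * i.1, hrow i.1⟩ : Fin m), i.2) := by
    intro i j h
    simp only [Prod.mk.injEq, Fin.mk.injEq, Nat.mul_left_cancel_iff hd, Fin.val_inj] at h
    exact Prod.ext h.1 h.2
  have hcard := card_le_sq_of_forall_mem_burnSet hinj (fun i => dvd_mul_right d i.1)
    (fun i => hs (Set.mem_univ _)) hr.le
  rw [Fintype.card_prod, Fintype.card_fin, Fintype.card_fin] at hcard
  exact hr.not_ge (by simpa [d] using ceil_sqrt_le_of_le_sq hcard)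

/-- Lower bound for fences with `c ≥ 2`: if
`ℓ = max {k : (k-1)⌈√(kn)⌉ + 1 ≤ c√n}`, then `b(G_{c√n, n}) ≥ ⌈√(ℓn)⌉`. -/
theorem burn_fence_lower (c : ℝ) (hc : 2 ≤ c) (n m ℓ : ℕ) (hn : 1 ≤ n)
    (hm : (m : ℝ) = c * Real.sqrt n)
    (hℓ : IsGreatest {k : ℕ | (k - 1) * ⌈Real.sqrt (k * n)⌉₊ + 1 ≤ m} ℓ) :
    ⌈Real.sqrt (ℓ * n)⌉₊ ≤ burn (gridGraph m n) :=
  burn_fence_lower_general n m ℓ hℓ
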